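/- arXiv:1106.4371 — 8 statements merged into one kernel-verified Lean document; each statement's English description precedes it below -/
import Mathlib

section
/- Let A be a unital (associative) algebra over a field F of characteristic not 2, M a unital A-bimodule, and δ : A → M a linear map that is Jordan derivable at zero, i.e., δ(ab+ba) = δ(a)b + aδ(b) + δ(b)a + bδ(a) whenever ab + ba = 0. Then for every idempotent p ∈ A one has δ(1)p = pδ(1). -/
open MulOpposite

/-- If `δ` is Jordan derivable at zero, then `δ(1)` commutes with every idempotent. -/
theorem stmt_0 {F A M : Type*} [Field F] [Ring A] [Algebra F A]
    [AddCommGroup M] [Module F M] [Module A M] [Module Aᵐᵒᵖ M]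
    [SMulCommClass A Aᵐᵒᵖ M] [IsScalarTower F A M] [IsScalarTower F Aᵐᵒᵖ M]
    (h2 : (2 : F) ≠ 0)
    (δ : A →ₗ[F] M)
    (hJ : ∀ a b : A, a * b + b * a = 0 →
      δ (a * b + b * a) = op b • δ a + a • δ b + op a • δ b + b • δ a)
    (p : A) (hp : p * p = p) :
    op p • δ 1 = p • δ 1 := by
  have h0 : p * (1 - p) + (1 - p) * p = 0 := by
    simp [mul_sub, sub_mul, hp]
  have hE := hJ p (1 - p) h0
  rw [h0, map_zero, map_sub] at hE
  have hcomm : ∀ x : M, op p • p • x = p • op p • x := fun x => (smul_comm _ _ _).symm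
  have hA := congrArg (fun x => p • x) hE
  have hB := congrArg (fun x => op p • x) hE
  simp only [smul_zero, smul_add, smul_sub, op_sub, op_one, sub_smul, one_smul,
    smul_smul, ← op_mul, hp, hcomm] at hA hB
  linear_combination (norm := abel1) hA - hB
end

section
/- Let A be a unital algebra over a field F of characteristic not 2, M a unital A-bimodule, and δ : A → M linear and Jordan derivable at zero. Then for every idempotent p ∈ A, δ(p) = δ(p)p + pδ(p) − pδ(1). -/
open MulOpposite

/-- If `δ` is Jordan derivable at zero, then for every idempotent `p`,
`δ(p) = δ(p)p + pδ(p) − pδ(1)`. -/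
theorem stmt_1 {F A M : Type*} [Field F] [Ring A] [Algebra F A]
    [AddCommGroup M] [Module F M] [Module A M] [Module Aᵐᵒᵖ M]
    [SMulCommClass A Aᵐᵒᵖ M] [IsScalarTower F A M] [IsScalarTower F Aᵐᵒᵖ M]
    (h2 : (2 : F) ≠ 0)
    (δ : A →ₗ[F] M)
    (hJ : ∀ a b : A, a * b + b * a = 0 →
      δ (a * b + b * a) = op b • δ a + a • δ b + op a • δ b + b • δ a)
    (p : A) (hp : p * p = p) :
    δ p = op p • δ p + p • δ p - p • δ 1 := by
  have h0 : p * (1 - p) + (1 - p) * p = 0 := by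
    simp [mul_sub, sub_mul, hp]
  have star := hJ p (1 - p) h0
  rw [h0, map_zero, map_sub, op_sub, op_one, sub_smul, sub_smul, one_smul, one_smul,
    smul_sub, smul_sub] at star
  have hL : ∀ m : M, p • p • m = p • m := fun m => by rw [smul_smul, hp]
  have hR : ∀ m : M, op p • op p • m = op p • m := fun m => by
    rw [smul_smul, ← op_mul, hp]
  have hC : ∀ m : M, op p • p • m = p • op p • m := fun m => (smul_comm p (op p) m).symm
  have hcancel : ∀ x y : M, x + x = y + y → x = y := by
    intro x y h
    have h' : (2 : F) • x = (2 : F) • y := by rw [two_smul, two_smul]; exact h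
    have := congrArg (fun m : M => (2 : F)⁻¹ • m) h'
    simpa [smul_smul, inv_mul_cancel₀ h2] using this
  have h3 := congrArg (fun m : M => p • op p • m) star
  simp only [smul_sub, smul_add, smul_zero, hL, hR, hC] at h3
  have h1 := congrArg (fun m : M => p • m) star
  simp only [smul_sub, smul_add, smul_zero, hL, hR, hC] at h1
  have h2' := congrArg (fun m : M => op p • m) star
  simp only [smul_sub, smul_add, smul_zero, hL, hR, hC] at h2'
  -- Corner relation: p•δ1•p = p•δp•p
  have k0 : p • op p • δ 1 = p • op p • δ p := by
    apply hcancel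
    rw [← sub_eq_zero]
    calc p • op p • δ 1 + p • op p • δ 1 - (p • op p • δ p + p • op p • δ p)
        = p • op p • δ p - p • op p • δ p +
            (p • op p • δ 1 - p • op p • δ p) +
            (p • op p • δ 1 - p • op p • δ p) +
            (p • op p • δ p - p • op p • δ p) := by abel
      _ = 0 := h3.symm
  rw [k0] at h1 h2'
  have k1 : p • δ 1 = p • op p • δ p := by
    rw [← sub_eq_zero]
    calc p • δ 1 - p • op p • δ p
        = p • δ p - p • op p • δ p + (p • δ 1 - p • δ p) +
            (p • op p • δ p - p • op p • δ p) + (p • δ p - p • δ p) := by abel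
      _ = 0 := h1.symm
  have k2 : op p • δ 1 = p • op p • δ p := by
    rw [← sub_eq_zero]
    calc op p • δ 1 - p • op p • δ p
        = op p • δ p - op p • δ p + (p • op p • δ p - p • op p • δ p) +
            (op p • δ 1 - op p • δ p) + (op p • δ p - p • op p • δ p) := by abel
      _ = 0 := h2'.symm
  rw [k1, k2] at star
  rw [k1]
  apply hcancel
  rw [← sub_eq_zero]
  calc δ p + δ p - (op p • δ p + p • δ p - p • op p • δ p +
          (op p • δ p + p • δ p - p • op p • δ p))
      = δ p - op p • δ p + (p • op p • δ p - p • δ p) +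
          (p • op p • δ p - op p • δ p) + (δ p - p • δ p) := by abel
    _ = 0 := star.symm
end

section
/- Let A be a unital algebra over a field F of characteristic not 2, M a unital A-bimodule, and δ : A → M linear and Jordan derivable at zero. Then for any two idempotents p, q ∈ A, δ(pq + qp) = δ(p)q + pδ(q) + δ(q)p + qδ(p) − δ(1)(pq + qp). -/
open MulOpposite

set_option maxHeartbeats 4000000
set_option synthInstance.maxHeartbeats 400000

/-- If `δ` is Jordan derivable at zero, then for any idempotents `p, q`,
`δ(pq+qp) = δ(p)q + pδ(q) + δ(q)p + qδ(p) − δ(1)(pq+qp)`. -/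
theorem stmt_2 {F A M : Type*} [Field F] [Ring A] [Algebra F A]
    [AddCommGroup M] [Module F M] [Module A M] [Module Aᵐᵒᵖ M]
    [SMulCommClass A Aᵐᵒᵖ M] [IsScalarTower F A M] [IsScalarTower F Aᵐᵒᵖ M]
    (h2 : (2 : F) ≠ 0)
    (δ : A →ₗ[F] M)
    (hJ : ∀ a b : A, a * b + b * a = 0 →
      δ (a * b + b * a) = op b • δ a + a • δ b + op a • δ b + b • δ a)
    (p q : A) (hp : p * p = p) (hq : q * q = q) :
    δ (p * q + q * p) =
      op q • δ p + p • δ q + op p • δ q + q • δ p - op (p * q + q * p) • δ 1 := by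
  haveI : SMulCommClass Aᵐᵒᵖ A M := SMulCommClass.symm A Aᵐᵒᵖ M
  have hp2 : ∀ x : A, p * (p * x) = p * x := fun x => by rw [← mul_assoc, hp]
  have hq2 : ∀ x : A, q * (q * x) = q * x := fun x => by rw [← mul_assoc, hq]
  have swap : ∀ (a : A) (b : Aᵐᵒᵖ) (m : M), b • a • m = a • b • m :=
    fun a b m => smul_comm b a m
  have hps : ∀ m : M, p • p • m = p • m := fun m => by rw [← mul_smul, hp]
  have hqs : ∀ m : M, q • q • m = q • m := fun m => by rw [← mul_smul, hq]
  have hpo : ∀ m : M, op p • op p • m = op p • m := fun m => by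
    rw [← mul_smul, ← op_mul, hp]
  have hqo : ∀ m : M, op q • op q • m = op q • m := fun m => by
    rw [← mul_smul, ← op_mul, hq]
  have pf1 : p*(1-p)+(1-p)*p = 0 := by
    simp only [mul_sub, sub_mul, mul_add, add_mul, mul_one, one_mul, mul_assoc, hp, hq, hp2, hq2] <;> abel
  have e1 : (op (1-p) • δ p + p • δ (1-p) + op p • δ (1-p) + (1-p) • δ p) = 0 := by
    have h := hJ p (1-p) pf1
    rw [pf1, map_zero] at h
    exact h.symm
  have pf2 : (p+p-1)*(p*q - p*q*p)+(p*q - p*q*p)*(p+p-1) = 0 := by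
    simp only [mul_sub, sub_mul, mul_add, add_mul, mul_one, one_mul, mul_assoc, hp, hq, hp2, hq2] <;> abel
  have e2 : (op (p*q - p*q*p) • δ (p+p-1) + (p+p-1) • δ (p*q - p*q*p) + op (p+p-1) • δ (p*q - p*q*p) + (p*q - p*q*p) • δ (p+p-1)) = 0 := by
    have h := hJ (p+p-1) (p*q - p*q*p) pf2
    rw [pf2, map_zero] at h
    exact h.symm
  have pf3 : (p+p-1)*(q*p - p*q*p)+(q*p - p*q*p)*(p+p-1) = 0 := by
    simp only [mul_sub, sub_mul, mul_add, add_mul, mul_one, one_mul, mul_assoc, hp, hq, hp2, hq2] <;> abel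
  have e3 : (op (q*p - p*q*p) • δ (p+p-1) + (p+p-1) • δ (q*p - p*q*p) + op (p+p-1) • δ (q*p - p*q*p) + (q*p - p*q*p) • δ (p+p-1)) = 0 := by
    have h := hJ (p+p-1) (q*p - p*q*p) pf3
    rw [pf3, map_zero] at h
    exact h.symm
  have pf4 : p*(q - p*q - q*p + p*q*p)+(q - p*q - q*p + p*q*p)*p = 0 := by
    simp only [mul_sub, sub_mul, mul_add, add_mul, mul_one, one_mul, mul_assoc, hp, hq, hp2, hq2] <;> abel
  have e4 : (op (q - p*q - q*p + p*q*p) • δ p + p • δ (q - p*q - q*p + p*q*p) + op p • δ (q - p*q - q*p + p*q*p) + (q - p*q - q*p + p*q*p) • δ p) = 0 := by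
    have h := hJ p (q - p*q - q*p + p*q*p) pf4
    rw [pf4, map_zero] at h
    exact h.symm
  have pf5 : (1-p)*(p*q*p)+(p*q*p)*(1-p) = 0 := by
    simp only [mul_sub, sub_mul, mul_add, add_mul, mul_one, one_mul, mul_assoc, hp, hq, hp2, hq2] <;> abel
  have e5 : (op (p*q*p) • δ (1-p) + (1-p) • δ (p*q*p) + op (1-p) • δ (p*q*p) + (p*q*p) • δ (1-p)) = 0 := by
    have h := hJ (1-p) (p*q*p) pf5
    rw [pf5, map_zero] at h
    exact h.symm
  have pf6 : q*(1-q)+(1-q)*q = 0 := by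
    simp only [mul_sub, sub_mul, mul_add, add_mul, mul_one, one_mul, mul_assoc, hp, hq, hp2, hq2] <;> abel
  have e6 : (op (1-q) • δ q + q • δ (1-q) + op q • δ (1-q) + (1-q) • δ q) = 0 := by
    have h := hJ q (1-q) pf6
    rw [pf6, map_zero] at h
    exact h.symm
  have z : -op q • op p • (op (1-p) • δ p + p • δ (1-p) + op p • δ (1-p) + (1-p) • δ p) + op p • op q • (op (1-p) • δ p + p • δ (1-p) + op p • δ (1-p) + (1-p) • δ p) - q • op p • (op (1-p) • δ p + p • δ (1-p) + op p • δ (1-p) + (1-p) • δ p) - q • op p • (op (1-p) • δ p + p • δ (1-p) + op p • δ (1-p) + (1-p) • δ p) + p • q • (op (1-p) • δ p + p • δ (1-p) + op p • δ (1-p) + (1-p) • δ p) + q • p • (op (1-p) • δ p + p • δ (1-p) + op p • δ (1-p) + (1-p) • δ p) + (op (p*q - p*q*p) • δ (p+p-1) + (p+p-1) • δ (p*q - p*q*p) + op (p+p-1) • δ (p*q - p*q*p) + (p*q - p*q*p) • δ (p+p-1)) + op p • (op (p*q - p*q*p) • δ (p+p-1) + (p+p-1) • δ (p*q - p*q*p)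 + op (p+p-1) • δ (p*q - p*q*p) + (p*q - p*q*p) • δ (p+p-1)) - p • (op (p*q - p*q*p) • δ (p+p-1) + (p+p-1) • δ (p*q - p*q*p) + op (p+p-1) • δ (p*q - p*q*p) + (p*q - p*q*p) • δ (p+p-1)) + (op (q*p - p*q*p) • δ (p+p-1) + (p+p-1) • δ (q*p - p*q*p) + op (p+p-1) • δ (q*p - p*q*p) + (q*p - p*q*p) • δ (p+p-1)) - op p • (op (q*p - p*q*p) • δ (p+p-1) + (p+p-1) • δ (q*p - p*q*p) + op (p+p-1) • δ (q*p - p*q*p) + (q*p - p*q*p) • δ (p+p-1)) + p • (op (q*p - p*q*p) • δ (p+p-1) + (p+p-1) • δ (q*p - p*q*p) + op (p+p-1) • δ (q*p - p*q*p) + (q*p - p*q*p) • δ (p+p-1)) + (op (q - p*q - q*p + p*q*p) • δ p + p • δ (q - p*q - q*p + p*q*p) + op p • δ (q - p*q - q*p + p*q*p) + (q - p*q - q*p + p*q*p) • δ p) + (op (q - p*q - q*p + p*q*p) • δ p + p • δ (q - p*q - q*p + p*q*p) + op p • δ (q - p*q - q*p + p*q*p) + (q - p*q - q*p + p*q*p)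 • δ p) - (op (p*q*p) • δ (1-p) + (1-p) • δ (p*q*p) + op (1-p) • δ (p*q*p) + (p*q*p) • δ (1-p)) - (op (p*q*p) • δ (1-p) + (1-p) • δ (p*q*p) + op (1-p) • δ (p*q*p) + (p*q*p) • δ (1-p)) - op p • op q • (op (1-q) • δ q + q • δ (1-q) + op q • δ (1-q) + (1-q) • δ q) - op p • op q • (op (1-q) • δ q + q • δ (1-q) + op q • δ (1-q) + (1-q) • δ q) + q • op p • (op (1-q) • δ q + q • δ (1-q) + op q • δ (1-q) + (1-q) • δ q) + q • op p • (op (1-q) • δ q + q • δ (1-q) + op q • δ (1-q) + (1-q) • δ q) =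
      ((op q • δ p + p • δ q + op p • δ q + q • δ p - op (p * q + q * p) • δ 1) + (op q • δ p + p • δ q + op p • δ q + q • δ p - op (p * q + q * p) • δ 1)) - (δ (p * q + q * p) + δ (p * q + q * p)) := by
    simp only [map_add, map_sub, map_one, smul_add, smul_sub, add_smul, sub_smul, one_smul,
      mul_smul, op_add, op_sub, op_one, op_mul, smul_neg, neg_smul, swap, hps, hqs, hpo, hqo]
    abel
  have z0 : -op q • op p • (op (1-p) • δ p + p • δ (1-p) + op p • δ (1-p) + (1-p) • δ p) + op p • op q • (op (1-p) • δ p + p • δ (1-p) + op p • δ (1-p) + (1-p) • δ p) - q • op p • (op (1-p) • δ p + p • δ (1-p) + op p • δ (1-p) + (1-p) • δ p) - q • op p • (op (1-p) • δ p + p • δ (1-p) + op p • δ (1-p) + (1-p) • δ p) + p • q • (op (1-p) • δ p + p • δ (1-p) + op p • δ (1-p) + (1-p) • δ p) + q • p • (op (1-p) • δ p + p • δ (1-p) + op p • δ (1-p) + (1-p) • δ p) + (op (p*q - p*q*p) • δ (p+p-1) + (p+p-1) • δ (p*q - p*q*p) + op (p+p-1) • δ (p*q - p*q*p) + (p*q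 - p*q*p) • δ (p+p-1)) + op p • (op (p*q - p*q*p) • δ (p+p-1) + (p+p-1) • δ (p*q - p*q*p) + op (p+p-1) • δ (p*q - p*q*p) + (p*q - p*q*p) • δ (p+p-1)) - p • (op (p*q - p*q*p) • δ (p+p-1) + (p+p-1) • δ (p*q - p*q*p) + op (p+p-1) • δ (p*q - p*q*p) + (p*q - p*q*p) • δ (p+p-1)) + (op (q*p - p*q*p) • δ (p+p-1) + (p+p-1) • δ (q*p - p*q*p) + op (p+p-1) • δ (q*p - p*q*p) + (q*p - p*q*p) • δ (p+p-1)) - op p • (op (q*p - p*q*p) • δ (p+p-1) + (p+p-1) • δ (q*p - p*q*p) + op (p+p-1) • δ (q*p - p*q*p) + (q*p - p*q*p) • δ (p+p-1)) + p • (op (q*p - p*q*p) • δ (p+p-1) + (p+p-1) • δ (q*p - p*q*p) + op (p+p-1) • δ (q*p - p*q*p) + (q*p - p*q*p) • δ (p+p-1)) + (op (q - p*q - q*p + p*q*p) • δ p + p • δ (q - p*q - q*p + p*q*p) + op p • δ (q - p*q - q*p + p*q*p) + (q - p*q - q*p + p*q*p) • δ p) + (op (q - p*q - q*p + p*q*p)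 • δ p + p • δ (q - p*q - q*p + p*q*p) + op p • δ (q - p*q - q*p + p*q*p) + (q - p*q - q*p + p*q*p) • δ p) - (op (p*q*p) • δ (1-p) + (1-p) • δ (p*q*p) + op (1-p) • δ (p*q*p) + (p*q*p) • δ (1-p)) - (op (p*q*p) • δ (1-p) + (1-p) • δ (p*q*p) + op (1-p) • δ (p*q*p) + (p*q*p) • δ (1-p)) - op p • op q • (op (1-q) • δ q + q • δ (1-q) + op q • δ (1-q) + (1-q) • δ q) - op p • op q • (op (1-q) • δ q + q • δ (1-q) + op q • δ (1-q) + (1-q) • δ q) + q • op p • (op (1-q) • δ q + q • δ (1-q) + op q • δ (1-q) + (1-q) • δ q) + q • op p • (op (1-q) • δ q + q • δ (1-q) + op q • δ (1-q) + (1-q) • δ q) = (0:M) := by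
    rw [e1, e2, e3, e4, e5, e6]
    simp
  have key : δ (p * q + q * p) + δ (p * q + q * p) = (op q • δ p + p • δ q + op p • δ q + q • δ p - op (p * q + q * p) • δ 1) + (op q • δ p + p • δ q + op p • δ q + q • δ p - op (p * q + q * p) • δ 1) := by
    have h9 : ((op q • δ p + p • δ q + op p • δ q + q • δ p - op (p * q + q * p) • δ 1) + (op q • δ p + p • δ q + op p • δ q + q • δ p - op (p * q + q * p) • δ 1)) - (δ (p * q + q * p) + δ (p * q + q * p)) = 0 := by
      rw [← z]; exact z0
    exact (sub_eq_zero.mp h9).symm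
  have key4 : (2:F) • δ (p * q + q * p) = (2:F) • (op q • δ p + p • δ q + op p • δ q + q • δ p - op (p * q + q * p) • δ 1) := by
    rw [two_smul, two_smul]; exact key
  calc δ (p * q + q * p) = (2:F)⁻¹ • ((2:F) • δ (p * q + q * p)) := by rw [inv_smul_smul₀ h2]
    _ = (2:F)⁻¹ • ((2:F) • (op q • δ p + p • δ q + op p • δ q + q • δ p - op (p * q + q * p) • δ 1)) := by rw [key4]
    _ = (op q • δ p + p • δ q + op p • δ q + q • δ p - op (p * q + q * p) • δ 1) := by rw [inv_smul_smul₀ h2]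
end

section
/- Let X be a vector space over a field F, E a subspace of X, and G a subspace of the dual space X* such that there exist z ∈ E and g ∈ G with g(z) = 1. Then for every x ∈ E and f ∈ G, the rank-one operator x ⊗ f (defined by y ↦ f(y)x) is a linear combination of idempotent operators, each of which is a rank-one operator u ⊗ h with u ∈ E and h ∈ G. -/
/-- Every rank-one operator `x ⊗ f` with `x ∈ E`, `f ∈ G` is a linear combination of
idempotent rank-one operators `u ⊗ h` with `u ∈ E`, `h ∈ G`, `h u = 1`, provided there
exist `z ∈ E` and `g ∈ G` with `g z = 1`. -/
theorem stmt_3 {F X : Type*} [Field F] (h2 : (2 : F) ≠ 0) [AddCommGroup X] [Module F X]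
    (E : Submodule F X) (G : Submodule F (Module.Dual F X))
    (hz : ∃ z ∈ E, ∃ g ∈ G, g z = 1)
    (x : X) (hx : x ∈ E) (f : Module.Dual F X) (hf : f ∈ G) :
    f.smulRight x ∈
      Submodule.span F
        {T : X →ₗ[F] X | ∃ u ∈ E, ∃ h ∈ G, h u = 1 ∧ T = h.smulRight u} := by
  obtain ⟨z, hzE, g, hgG, hgz⟩ := hz
  set S := Submodule.span F
      {T : X →ₗ[F] X | ∃ u ∈ E, ∃ h ∈ G, h u = 1 ∧ T = h.smulRight u} with hS
  have keyA : ∀ y ∈ E, ∀ φ ∈ G, φ y ≠ 0 → φ.smulRight y ∈ S := by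
    intro y hy φ hφ hne
    have heq : φ.smulRight y = (φ y) • φ.smulRight ((φ y)⁻¹ • y) := by
      ext w
      simp only [LinearMap.smulRight_apply, LinearMap.smul_apply, smul_smul]
      rw [mul_comm (φ y), mul_assoc, inv_mul_cancel₀ hne, mul_one]
    rw [heq]
    refine S.smul_mem _ (Submodule.subset_span ?_)
    exact ⟨(φ y)⁻¹ • y, E.smul_mem _ hy, φ, hφ,
      by simp [inv_mul_cancel₀ hne], rfl⟩
  by_cases hfx : f x ≠ 0
  · exact keyA x hx f hf hfx
  push_neg at hfx
  by_cases hgx : g x ≠ 0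
  · have heq : f.smulRight x = (f + g).smulRight x - g.smulRight x := by
      ext w; simp [add_smul]
    rw [heq]
    refine sub_mem (keyA x hx (f + g) (add_mem hf hgG) ?_) (keyA x hx g hgG hgx)
    simp [hfx, hgx]
  push_neg at hgx
  by_cases hfz : f z ≠ 0
  · have heq : f.smulRight x = f.smulRight (x + z) - f.smulRight z := by
      ext w; simp [smul_add]
    rw [heq]
    refine sub_mem (keyA (x + z) (add_mem hx hzE) f hf ?_) (keyA z hzE f hf hfz)
    simp [hfx, hfz]
  push_neg at hfz
  have h4 : (4 : F) ≠ 0 := by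
    have : (4 : F) = 2 * 2 := by norm_num
    rw [this]; exact mul_ne_zero h2 h2
  have heq : (4 : F) • f.smulRight x =
      (g + f).smulRight (z + x) + (g - f).smulRight (z - x)
        - (g - f).smulRight (z + x) - (g + f).smulRight (z - x) := by
    ext w
    simp only [LinearMap.smul_apply, LinearMap.sub_apply, LinearMap.add_apply,
      LinearMap.smulRight_apply, LinearMap.add_apply, LinearMap.sub_apply]
    module
  have heq2 : f.smulRight x = (4 : F)⁻¹ • ((4 : F) • f.smulRight x) := by
    rw [inv_smul_smul₀ h4]
  rw [heq2, heq]
  refine S.smul_mem _ (sub_mem (sub_mem (add_mem ?_ ?_) ?_) ?_)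
  · exact keyA (z + x) (add_mem hzE hx) (g + f) (add_mem hgG hf)
      (by simp [hgz, hgx, hfz, hfx])
  · exact keyA (z - x) (sub_mem hzE hx) (g - f) (sub_mem hgG hf)
      (by simp [hgz, hgx, hfz, hfx])
  · exact keyA (z + x) (add_mem hzE hx) (g - f) (sub_mem hgG hf)
      (by simp [hgz, hgx, hfz, hfx])
  · exact keyA (z - x) (sub_mem hzE hx) (g + f) (add_mem hgG hf)
      (by simp [hgz, hgx, hfz, hfx])
end

section
/- Let A be a unital algebra, M a unital A-bimodule, and δ : A → M a linear map satisfying δ(ab + ba) = δ(a)b + aδ(b) + δ(b)a + bδ(a) whenever ab = 0. Let p ∈ A be an idempotent such that δ(1)p = pδ(1) and δ(p) = δ(p)p + pδ(p) − δ(1)p. Then for every a ∈ A: δ(pa + ap) = δ(p)a + pδ(a) + δ(a)p + aδ(p) − δ(1)pa − paδ(1). -/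
open MulOpposite

/-- For a linear map with the WJD property, given the auxiliary identities,
`δ(pa + ap) = δ(p)a + pδ(a) + δ(a)p + aδ(p) − δ(1)pa − paδ(1)` for every
idempotent `p` and every `a`. -/
theorem stmt_4 {F A M : Type*} [Field F] [Ring A] [Algebra F A]
    [AddCommGroup M] [Module F M] [Module A M] [Module Aᵐᵒᵖ M]
    [SMulCommClass A Aᵐᵒᵖ M] [IsScalarTower F A M] [IsScalarTower F Aᵐᵒᵖ M]
    (δ : A →ₗ[F] M)
    (hWJD : ∀ a b : A, a * b = 0 →
      δ (a * b + b * a) = op b • δ a + a • δ b + op a • δ b + b • δ a)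
    (p : A) (hp : p * p = p) (a : A)
    (h1 : op p • δ 1 = p • δ 1)
    (h2 : δ p = op p • δ p + p • δ p - op p • δ 1) :
    δ (p * a + a * p) =
      op a • δ p + p • δ a + op p • δ a + a • δ p
        - op (p * a) • δ 1 - (p * a) • δ 1 := by
  obtain ⟨u, hu⟩ : ∃ x, x = p * (a * p) := ⟨_, rfl⟩
  obtain ⟨v, hv⟩ : ∃ x, x = p * a - u := ⟨_, rfl⟩
  obtain ⟨w, hw⟩ : ∃ x, x = a * p - u := ⟨_, rfl⟩
  obtain ⟨z, hz⟩ : ∃ x, x = a - p * a - a * p + u := ⟨_, rfl⟩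
  have hpu : p * u = u := by rw [hu, ← mul_assoc, hp]
  have hup : u * p = u := by rw [hu, mul_assoc, mul_assoc, hp]
  have hpv : p * v = v := by rw [hv, mul_sub, hpu, ← mul_assoc, hp]
  have hvp : v * p = 0 := by rw [hv, sub_mul, hup, hu, ← mul_assoc, sub_self]
  have hpw : p * w = 0 := by rw [hw, mul_sub, hpu, hu, ← mul_assoc, sub_self]
  have hwp : w * p = w := by rw [hw, sub_mul, hup, mul_assoc, hp]
  have hpz : p * z = 0 := by
    rw [hz, mul_add, mul_sub, mul_sub, hpu, ← mul_assoc p p a, hp, hu, ← mul_assoc]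
    abel
  have hzp : z * p = 0 := by
    rw [hz, add_mul, sub_mul, sub_mul, hup, hu, ← mul_assoc, mul_assoc a p p, hp]
    abel
  have hqu : (1 - p) * u = 0 := by rw [sub_mul, one_mul, hpu, sub_self]
  have huq : u * (1 - p) = 0 := by rw [mul_sub, mul_one, hup, sub_self]
  have hqv : (1 - p) * v = 0 := by rw [sub_mul, one_mul, hpv, sub_self]
  have hvq : v * (1 - p) = v := by rw [mul_sub, mul_one, hvp, sub_zero]
  have Eu := hWJD (1 - p) u hqu
  rw [hqu, huq, add_zero, map_zero] at Eu
  have Ev := hWJD (1 - p) v hqv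
  rw [hqv, hvq, zero_add] at Ev
  have Ew := hWJD p w hpw
  rw [hpw, hwp, zero_add] at Ew
  have Ez := hWJD p z hpz
  rw [hpz, hzp, add_zero, map_zero] at Ez
  simp only [map_sub, map_one, op_sub, op_one, sub_smul, one_smul, smul_sub] at Eu Ev
  have eap : p * a + a * p = u + u + (v + w) := by rw [hv, hw]; abel
  have epa : p * a = u + v := by rw [hv]; abel
  have ea : a = u + v + (w + z) := by rw [hv, hw, hz]; abel
  rw [eap, epa, ea]
  simp only [map_add, op_add, add_smul, smul_add]
  linear_combination (norm := abel) Ew + Ez - Eu - Ev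
end

section
/- Define δ on the algebra T₂(ℂ) of 2×2 upper triangular complex matrices by δ([[x₁₁, x₁₂],[0, x₂₂]]) = [[x₁₁, x₁₁ − x₂₂ + x₁₂],[0, x₂₂]]. Then δ is a generalized derivation with δ(I) = I (i.e., δ(AB) = δ(A)B + Aδ(B) − Aδ(I)B for all A, B ∈ T₂(ℂ)), but δ does not satisfy the WJD property: there exist A, B ∈ T₂(ℂ) with AB = 0 and δ(AB + BA) ≠ δ(A)B + Aδ(B) + δ(B)A + Bδ(A). -/
/-!
On upper triangular matrices the derivation `τ` is the inner derivation `M ↦ M E₁₂ - E₁₂ M`, so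
`δ = id + τ` there. For any map of this shape the generalized-derivation identity is a ring
identity, while the Jordan expression overshoots by exactly `ab + ba`:
`δ(a)b + aδ(b) + δ(b)a + bδ(a) = δ(ab + ba) + (ab + ba)`.
So WJD fails at any pair with `ab = 0 ≠ ba`, such as `a = E₁₂`, `b = E₁₁`.
-/

section IdentityAddInnerDerivation

variable {R : Type*} [Ring R] {S : Subsemiring R} {δ : R → R} {e : R}

theorem map_one_of_eq_add_commutator (hδ : ∀ x ∈ S, δ x = x + (x * e - e * x)) : δ 1 = 1 := by
  rw [hδ 1 S.one_mem]
  noncomm_ring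

theorem map_mul_of_eq_add_commutator (hδ : ∀ x ∈ S, δ x = x + (x * e - e * x))
    {a b : R} (ha : a ∈ S) (hb : b ∈ S) :
    δ (a * b) = δ a * b + a * δ b - a * δ 1 * b := by
  rw [map_one_of_eq_add_commutator hδ, hδ _ (S.mul_mem ha hb), hδ a ha, hδ b hb]
  noncomm_ring

theorem jordan_add_eq_of_eq_add_commutator (hδ : ∀ x ∈ S, δ x = x + (x * e - e * x))
    {a b : R} (ha : a ∈ S) (hb : b ∈ S) :
    δ a * b + a * δ b + δ b * a + b * δ a = δ (a * b + b * a) + (a * b + b * a) := by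
  rw [hδ _ (S.add_mem (S.mul_mem ha hb) (S.mul_mem hb ha)), hδ a ha, hδ b hb]
  noncomm_ring

theorem map_jordan_ne_of_eq_add_commutator (hδ : ∀ x ∈ S, δ x = x + (x * e - e * x))
    {a b : R} (ha : a ∈ S) (hb : b ∈ S) (hab : a * b = 0) (hba : b * a ≠ 0) :
    δ (a * b + b * a) ≠ δ a * b + a * δ b + δ b * a + b * δ a := by
  rw [jordan_add_eq_of_eq_add_commutator hδ ha hb, ne_eq, left_eq_add, hab, zero_add]
  exact hba

end IdentityAddInnerDerivation

namespace Matrix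

variable {R : Type*} [CommRing R]

theorem isUpperTriangular_fin_two_iff {M : Matrix (Fin 2) (Fin 2) R} :
    M.IsUpperTriangular ↔ M 1 0 = 0 := by
  refine ⟨fun h => h (by decide), fun h i j hij => ?_⟩
  fin_cases i <;> fin_cases j <;> simp_all

theorem of_fin_two_eq_add_commutator {M : Matrix (Fin 2) (Fin 2) R} (hM : M 1 0 = 0) :
    !![M 0 0, M 0 0 - M 1 1 + M 0 1; 0, M 1 1] = M + (M * !![0, 1; 0, 0] - !![0, 1; 0, 0] * M) := by
  rw [eta_fin_two M, hM, mul_fin_two, mul_fin_two]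
  simp [add_comm]

end Matrix

/-- The map `δ([[x₁₁,x₁₂],[0,x₂₂]]) = [[x₁₁, x₁₁ − x₂₂ + x₁₂],[0,x₂₂]]` on upper
triangular `2 × 2` complex matrices satisfies `δ(I) = I`, is a generalized
derivation, but fails the WJD property. -/
theorem stmt_8 (δ : Matrix (Fin 2) (Fin 2) ℂ → Matrix (Fin 2) (Fin 2) ℂ)
    (hδ : ∀ M : Matrix (Fin 2) (Fin 2) ℂ,
      δ M = !![M 0 0, M 0 0 - M 1 1 + M 0 1; 0, M 1 1]) :
    δ 1 = 1 ∧
    (∀ A B : Matrix (Fin 2) (Fin 2) ℂ, A 1 0 = 0 → B 1 0 = 0 →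
      δ (A * B) = δ A * B + A * δ B - A * δ 1 * B) ∧
    (∃ A B : Matrix (Fin 2) (Fin 2) ℂ, A 1 0 = 0 ∧ B 1 0 = 0 ∧ A * B = 0 ∧
      δ (A * B + B * A) ≠ δ A * B + A * δ B + δ B * A + B * δ A) := by
  let U := Matrix.blockTriangularSubsemiring ℂ (id : Fin 2 → Fin 2)
  have mem_U {M : Matrix (Fin 2) (Fin 2) ℂ} : M ∈ U ↔ M 1 0 = 0 :=
    Matrix.isUpperTriangular_fin_two_iff
  have hδU : ∀ M ∈ U, δ M = M + (M * !![0, 1; 0, 0] - !![0, 1; 0, 0] * M) := fun M hM =>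
    (hδ M).trans (Matrix.of_fin_two_eq_add_commutator (mem_U.1 hM))
  refine ⟨map_one_of_eq_add_commutator hδU,
    fun A B hA hB => map_mul_of_eq_add_commutator hδU (mem_U.2 hA) (mem_U.2 hB),
    !![0, 1; 0, 0], !![1, 0; 0, 0], rfl, rfl, ?_,
    map_jordan_ne_of_eq_add_commutator hδU (mem_U.2 rfl) (mem_U.2 rfl) ?_ ?_⟩
  all_goals simp [← Matrix.ext_iff, Fin.forall_fin_two]
end

section
/- Let X be a vector space over a field F. If E ⊆ X and F₀ ⊆ X* are nonzero subspaces and Φ : E × F₀ → End(X) is a bilinear map such that Φ(x, f)(ker f) ⊆ F·x for all x ∈ E, f ∈ F₀, then there exist linear maps T : E → X and S : F₀ → X* such that Φ(x, f) = Tx ⊗ f + x ⊗ Sf for all x ∈ E, f ∈ F₀. -/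
/-- Proposition 1.2: if `Φ : E × F₀ → End(X)` is bilinear and
`Φ(x, f)(ker f) ⊆ F·x` for all `x ∈ E`, `f ∈ F₀`, then there exist linear maps
`T : E → X` and `S : F₀ → X*` with `Φ(x, f) = Tx ⊗ f + x ⊗ Sf`. -/
theorem stmt_10 {F X : Type*} [Field F] [AddCommGroup X] [Module F X]
    (E : Submodule F X) (F₀ : Submodule F (Module.Dual F X))
    (hE : E ≠ ⊥) (hF₀ : F₀ ≠ ⊥)
    (Φ : E →ₗ[F] F₀ →ₗ[F] (X →ₗ[F] X))
    (hker : ∀ (x : E) (f : F₀) (y : X),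
      (f : Module.Dual F X) y = 0 → ∃ c : F, Φ x f y = c • (x : X)) :
    ∃ (T : E →ₗ[F] X) (S : F₀ →ₗ[F] Module.Dual F X),
      ∀ (x : E) (f : F₀),
        Φ x f = (f : Module.Dual F X).smulRight (T x) + (S f).smulRight (x : X) := by
  classical
  -- pick a nonzero x₀ in E and a nonzero f₀ in F₀
  obtain ⟨x₀v, hx₀E, hx₀v⟩ := (Submodule.ne_bot_iff E).mp hE
  obtain ⟨f₀v, hf₀E, hf₀v⟩ := (Submodule.ne_bot_iff F₀).mp hF₀
  set x₀ : E := ⟨x₀v, hx₀E⟩ with hx₀def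
  set f₀ : F₀ := ⟨f₀v, hf₀E⟩ with hf₀def
  have hx₀ : (x₀ : X) ≠ 0 := hx₀v
  -- pick z₀ with f₀ z₀ = 1
  have hzex : ∃ z : X, (f₀ : Module.Dual F X) z ≠ 0 := by
    by_contra h
    push_neg at h
    exact hf₀v (by ext y; simpa using h y)
  obtain ⟨z, hz⟩ := hzex
  set z₀ : X := ((f₀ : Module.Dual F X) z)⁻¹ • z with hz₀def
  have hz₀ : (f₀ : Module.Dual F X) z₀ = 1 := by
    simp [hz₀def, map_smul, inv_mul_cancel₀ hz]
  -- Lemma A: basic decomposition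
  have lemA : ∀ (x : E) (f : F₀) (w : X), (f : Module.Dual F X) w = 1 →
      ∀ y : X, ∃ c : F,
        Φ x f y = (f : Module.Dual F X) y • (Φ x f w) + c • (x : X) := by
    intro x f w hw y
    obtain ⟨c, hc⟩ := hker x f (y - (f : Module.Dual F X) y • w)
      (by simp [map_sub, map_smul, hw])
    refine ⟨c, ?_⟩
    rw [map_sub, map_smul] at hc
    rw [← hc]
    abel
  -- Key claim
  have K : ∀ (x : E), (x : X) ≠ 0 → ∀ (f : F₀) (y : X),
      ∃ c : F, Φ x f y = (f : Module.Dual F X) y • (Φ x f₀ z₀) + c • (x : X) := by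
    intro x hx f y
    by_cases hdep : ∃ lam : F, (f : Module.Dual F X) = lam • (f₀ : Module.Dual F X)
    · obtain ⟨lam, hlam⟩ := hdep
      have hf : f = lam • f₀ := Subtype.ext hlam
      obtain ⟨c, hc⟩ := lemA x f₀ z₀ hz₀ y
      refine ⟨lam * c, ?_⟩
      rw [hf, map_smul, LinearMap.smul_apply, hc]
      simp only [Submodule.coe_smul, LinearMap.smul_apply, smul_eq_mul]
      module
    · -- f and f₀ independent
      have hwex : ∃ w : X, (f₀ : Module.Dual F X) w = 0 ∧
          (f : Module.Dual F X) w ≠ 0 := by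
        by_contra h
        push_neg at h
        refine hdep ⟨(f : Module.Dual F X) z₀, ?_⟩
        ext y'
        have h1 : (f : Module.Dual F X) (y' - (f₀ : Module.Dual F X) y' • z₀) = 0 :=
          h _ (by simp [map_sub, map_smul, hz₀])
        rw [map_sub, map_smul] at h1
        simp only [LinearMap.smul_apply, smul_eq_mul]
        have := sub_eq_zero.mp h1
        rw [this, smul_eq_mul]; ring
      obtain ⟨w, hw0, hwne⟩ := hwex
      set y₀ : X := ((f : Module.Dual F X) w)⁻¹ • w with hy₀def
      have hfy₀ : (f : Module.Dual F X) y₀ = 1 := by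
        simp [hy₀def, map_smul, inv_mul_cancel₀ hwne]
      have hf₀y₀ : (f₀ : Module.Dual F X) y₀ = 0 := by
        simp [hy₀def, map_smul, hw0]
      set z₁ : X := z₀ - (f : Module.Dual F X) z₀ • y₀ with hz₁def
      have hfz₁ : (f : Module.Dual F X) z₁ = 0 := by
        simp [hz₁def, map_sub, map_smul, hfy₀]
      have hf₀z₁ : (f₀ : Module.Dual F X) z₁ = 1 := by
        simp [hz₁def, map_sub, map_smul, hf₀y₀, hz₀]
      have hsum1 : ((f + f₀ : F₀) : Module.Dual F X) y₀ = 1 := by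
        simp [hfy₀, hf₀y₀]
      obtain ⟨c1, hc1⟩ := lemA x f y₀ hfy₀ z₁
      obtain ⟨c2, hc2⟩ := lemA x f₀ z₀ hz₀ z₁
      obtain ⟨c3, hc3⟩ := lemA x (f + f₀) y₀ hsum1 z₁
      obtain ⟨c', hc'⟩ := lemA x f₀ z₀ hz₀ y₀
      have hsumz₁ : ((f + f₀ : F₀) : Module.Dual F X) z₁ = 1 := by
        simp [hfz₁, hf₀z₁]
      rw [hfz₁, zero_smul, zero_add] at hc1
      rw [hf₀z₁, one_smul] at hc2
      rw [hsumz₁, one_smul] at hc3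
      rw [hf₀y₀, zero_smul, zero_add] at hc'
      have hsplit : Φ x (f + f₀) z₁ = Φ x f z₁ + Φ x f₀ z₁ := by
        simp [map_add]
      have hsplit₀ : Φ x (f + f₀) y₀ = Φ x f y₀ + Φ x f₀ y₀ := by
        simp [map_add]
      have key : Φ x f y₀ = Φ x f₀ z₀ + (c1 + c2 - c3 - c') • (x : X) := by
        have e1 := hsplit
        rw [hc1, hc2, hc3, hsplit₀, hc'] at e1
        linear_combination (norm := module) e1
      obtain ⟨c, hc⟩ := lemA x f y₀ hfy₀ y
      refine ⟨(f : Module.Dual F X) y * (c1 + c2 - c3 - c') + c, ?_⟩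
      rw [hc, key]
      module
  -- The linear map T
  let T : E →ₗ[F] X :=
    { toFun := fun x => Φ x f₀ z₀
      map_add' := by intro a b; simp [map_add]
      map_smul' := by intro c a; simp [map_smul] }
  have hTdef : ∀ x : E, T x = Φ x f₀ z₀ := fun _ => rfl
  -- choice of scalar functions for S
  choose s hsspec using fun (f : F₀) (y : X) => K x₀ hx₀ f y
  have hs_unique : ∀ (f : F₀) (y : X) (c : F),
      Φ x₀ f y = (f : Module.Dual F X) y • (Φ x₀ f₀ z₀) + c • (x₀ : X) →
      c = s f y := by
    intro f y c hcM
    have h2 := hsspec f y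
    have h3 : c • (x₀ : X) = s f y • (x₀ : X) :=
      add_left_cancel (hcM.symm.trans h2)
    exact smul_left_injective F hx₀ h3
  have hs_addy : ∀ (f : F₀) (y y' : X), s f (y + y') = s f y + s f y' := by
    intro f y y'
    refine (hs_unique f (y + y') _ ?_).symm
    rw [map_add, hsspec f y, hsspec f y', map_add]
    module
  have hs_smuly : ∀ (f : F₀) (a : F) (y : X), s f (a • y) = a * s f y := by
    intro f a y
    refine (hs_unique f (a • y) _ ?_).symm
    have hf1 : (f : Module.Dual F X) (a • y) = a * (f : Module.Dual F X) y := by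
      rw [map_smul, smul_eq_mul]
    rw [map_smul, hsspec f y, hf1]
    module
  have hs_addf : ∀ (f g : F₀) (y : X), s (f + g) y = s f y + s g y := by
    intro f g y
    refine (hs_unique (f + g) y _ ?_).symm
    have : Φ x₀ (f + g) y = Φ x₀ f y + Φ x₀ g y := by simp [map_add]
    rw [this, hsspec f y, hsspec g y]
    simp only [Submodule.coe_add, LinearMap.add_apply]
    module
  have hs_smulf : ∀ (a : F) (f : F₀) (y : X), s (a • f) y = a * s f y := by
    intro a f y
    refine (hs_unique (a • f) y _ ?_).symm
    have : Φ x₀ (a • f) y = a • Φ x₀ f y := by simp [map_smul]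
    rw [this, hsspec f y]
    simp only [Submodule.coe_smul, LinearMap.smul_apply, smul_eq_mul]
    module
  let S : F₀ →ₗ[F] Module.Dual F X :=
    { toFun := fun f =>
        { toFun := s f
          map_add' := hs_addy f
          map_smul' := fun a y => by simpa using hs_smuly f a y }
      map_add' := fun f g => LinearMap.ext fun y => hs_addf f g y
      map_smul' := fun a f => LinearMap.ext fun y => by
        simpa using hs_smulf a f y }
  have hSdef : ∀ (f : F₀) (y : X), S f y = s f y := fun _ _ => rfl
  refine ⟨T, S, ?_⟩
  intro x f
  by_cases hxdep : ∃ lam : F, (x : X) = lam • (x₀ : X)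
  · obtain ⟨lam, hlam⟩ := hxdep
    have hx : x = lam • x₀ := Subtype.ext (by simpa using hlam)
    ext y
    simp only [LinearMap.add_apply, LinearMap.smulRight_apply]
    have h1 : Φ x f y = lam • (Φ x₀ f y) := by rw [hx]; simp [map_smul]
    have h2 : T x = lam • T x₀ := by rw [hx, map_smul]
    rw [h1, h2, hsspec f y, hTdef x₀, hSdef, hlam]
    module
  · have hind : ∀ a b : F, a • (x : X) + b • (x₀ : X) = 0 → a = 0 ∧ b = 0 := by
      intro a b hab
      have ha : a = 0 := by
        by_contra ha
        refine hxdep ⟨-b / a, ?_⟩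
        have : a • (x : X) = (-b) • (x₀ : X) := by
          linear_combination (norm := module) hab
        calc (x : X) = a⁻¹ • (a • (x : X)) := by rw [smul_smul, inv_mul_cancel₀ ha, one_smul]
          _ = (-b / a) • (x₀ : X) := by rw [this, smul_smul]; ring_nf
      refine ⟨ha, ?_⟩
      rw [ha, zero_smul, zero_add] at hab
      exact (smul_eq_zero.mp hab).resolve_right hx₀
    have hxne : (x : X) ≠ 0 := fun h => hxdep ⟨0, by simp [h]⟩
    have hxx₀ : ((x + x₀ : E) : X) ≠ 0 := by
      intro h
      have := (hind 1 1 (by simpa using h)).1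
      exact one_ne_zero this
    ext y
    simp only [LinearMap.add_apply, LinearMap.smulRight_apply]
    obtain ⟨a, hA⟩ := K x hxne f y
    obtain ⟨b, hB⟩ := K (x + x₀) hxx₀ f y
    have hC := hsspec f y
    have hE' : Φ (x + x₀) f y = Φ x f y + Φ x₀ f y := by simp [map_add]
    have hT' : Φ (x + x₀) f₀ z₀ = Φ x f₀ z₀ + Φ x₀ f₀ z₀ := by simp [map_add]
    have hcomb : (a - b) • (x : X) + (s f y - b) • (x₀ : X) = 0 := by
      have e := hE'
      rw [hA, hB, hC, hT'] at e
      have hco : ((x + x₀ : E) : X) = (x : X) + (x₀ : X) := rfl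
      rw [hco] at e
      linear_combination (norm := module) -e
    obtain ⟨hab1, hab2⟩ := hind _ _ hcomb
    have ha' : a = s f y := by
      have h1 : a = b := sub_eq_zero.mp hab1
      have h2 : s f y = b := sub_eq_zero.mp hab2
      rw [h1, h2]
    rw [hA, hTdef, hSdef, ha']
end

section
/- Let A be a unital algebra over a field of characteristic ≠ 2, M a unital A-bimodule, and δ : A → M linear, Jordan derivable at zero. For any idempotent p ∈ A and a ∈ A, given the identity δ(ap + pa) = δ(a)p + aδ(p) + δ(p)a + pδ(a) − δ(1)(ap + pa) (Lemma 2.3(1)), it follows that δ(pap) = δ(p)ap + pδ(a)p + paδ(p) − 2δ(1)pap, assuming also δ(1)q = qδ(1) for all idempotents q and that the identity of Lemma 2.3(1) also holds with a replaced by ap + pa. -/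
open MulOpposite

/-- Lemma 2.3(2): for a linear map Jordan derivable at zero, given the identity of
Lemma 2.3(1) (also with `a` replaced by `ap + pa`) and `δ(1)q = qδ(1)` for all
idempotents `q`, one gets `δ(pap) = δ(p)ap + pδ(a)p + paδ(p) − 2δ(1)pap`. -/
theorem stmt_15 {F A M : Type*} [Field F] [Ring A] [Algebra F A]
    [AddCommGroup M] [Module F M] [Module A M] [Module Aᵐᵒᵖ M]
    [SMulCommClass A Aᵐᵒᵖ M] [IsScalarTower F A M] [IsScalarTower F Aᵐᵒᵖ M]
    (h2 : (2 : F) ≠ 0)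
    (δ : A →ₗ[F] M)
    (hJ : ∀ x y : A, x * y + y * x = 0 →
      δ (x * y + y * x) = op y • δ x + x • δ y + op x • δ y + y • δ x)
    (p : A) (hp : p * p = p) (a : A)
    (hcom : ∀ q : A, q * q = q → op q • δ 1 = q • δ 1)
    (h1 : ∀ b : A, δ (b * p + p * b) =
      op p • δ b + b • δ p + op b • δ p + p • δ b - op (b * p + p * b) • δ 1) :
    δ (p * a * p) =
      op (a * p) • δ p + p • op p • δ a + (p * a) • δ p
        - (2 : F) • (op (p * a * p) • δ 1) := by
  have comm2 : ∀ (x : A) (y : Aᵐᵒᵖ) (m : M), x • y • m = y • x • m :=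
    fun x y m => smul_comm x y m
  have hpp : ∀ x : A, p * (p * x) = p * x := fun x => by rw [← mul_assoc, hp]
  have key : (2:ℤ) • δ (p*a*p) - (2:ℤ) • (op (a * p) • δ p + p • op p • δ a + (p * a) • δ p
        - (2 : F) • (op (p * a * p) • δ 1)) =
      (2:ℤ) • (op (a*p) • (δ ((1:A)*p + p*(1:A)) - (op p • δ (1:A) + (1:A) • δ p + op (1:A) • δ p + p • δ (1:A) - op ((1:A)*p + p*(1:A)) • δ 1)))
      + (-2:ℤ) • (op (p*a*p) • (δ ((1:A)*p + p*(1:A)) - (op p • δ (1:A) + (1:A) • δ p + op (1:A) • δ p + p • δ (1:A) - op ((1:A)*p + p*(1:A)) • δ 1)))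
      + (-1:ℤ) • (op a • (δ (p*p + p*p) - (op p • δ p + p • δ p + op p • δ p + p • δ p - op (p*p + p*p) • δ 1)))
      + (1:ℤ) • (op (p*a) • (δ (p*p + p*p) - (op p • δ p + p • δ p + op p • δ p + p • δ p - op (p*p + p*p) • δ 1)))
      + (-1:ℤ) • (a • (δ (p*p + p*p) - (op p • δ p + p • δ p + op p • δ p + p • δ p - op (p*p + p*p) • δ 1)))
      + (1:ℤ) • (a • (op p • (δ (p*p + p*p) - (op p • δ p + p • δ p + op p • δ p + p • δ p - op (p*p + p*p) • δ 1))))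
      + (-2:ℤ) • ((δ (a*p + p*a) - (op p • δ a + a • δ p + op a • δ p + p • δ a - op (a*p + p*a) • δ 1)))
      + (2:ℤ) • (op p • (δ (a*p + p*a) - (op p • δ a + a • δ p + op a • δ p + p • δ a - op (a*p + p*a) • δ 1)))
      + (2:ℤ) • (p • (δ (a*p + p*a) - (op p • δ a + a • δ p + op a • δ p + p • δ a - op (a*p + p*a) • δ 1)))
      + (-1:ℤ) • (p • (op p • (δ (a*p + p*a) - (op p • δ a + a • δ p + op a • δ p + p • δ a - op (a*p + p*a) • δ 1))))
      + (2:ℤ) • ((δ ((a*p)*p + p*(a*p)) - (op p • δ (a*p) + (a*p) • δ p + op (a*p) • δ p + p • δ (a*p) - op ((a*p)*p + p*(a*p)) • δ 1)))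
      + (-2:ℤ) • (op p • (δ ((a*p)*p + p*(a*p)) - (op p • δ (a*p) + (a*p) • δ p + op (a*p) • δ p + p • δ (a*p) - op ((a*p)*p + p*(a*p)) • δ 1)))
      + (1:ℤ) • (p • (δ ((a*p)*p + p*(a*p)) - (op p • δ (a*p) + (a*p) • δ p + op (a*p) • δ p + p • δ (a*p) - op ((a*p)*p + p*(a*p)) • δ 1)))
      + (2:ℤ) • ((δ ((p*a)*p + p*(p*a)) - (op p • δ (p*a) + (p*a) • δ p + op (p*a) • δ p + p • δ (p*a) - op ((p*a)*p + p*(p*a)) • δ 1)))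
      + (1:ℤ) • (op p • (δ ((p*a)*p + p*(p*a)) - (op p • δ (p*a) + (p*a) • δ p + op (p*a) • δ p + p • δ (p*a) - op ((p*a)*p + p*(p*a)) • δ 1)))
      + (-2:ℤ) • (p • (δ ((p*a)*p + p*(p*a)) - (op p • δ (p*a) + (p*a) • δ p + op (p*a) • δ p + p • δ (p*a) - op ((p*a)*p + p*(p*a)) • δ 1)))
      + (-1:ℤ) • ((δ ((p*a*p)*p + p*(p*a*p)) - (op p • δ (p*a*p) + (p*a*p) • δ p + op (p*a*p) • δ p + p • δ (p*a*p) - op ((p*a*p)*p + p*(p*a*p)) • δ 1))) := by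
    simp only [smul_sub, smul_add, two_smul, op_add, op_mul, op_one, one_mul, mul_one,
      one_smul, map_add, add_smul, comm2, smul_smul, ← op_mul, mul_assoc, hp, hpp]
    abel
  have z : (2:ℤ) • δ (p*a*p) - (2:ℤ) • (op (a * p) • δ p + p • op p • δ a + (p * a) • δ p
        - (2 : F) • (op (p * a * p) • δ 1)) = 0 := by
    rw [key]
    simp only [h1, sub_self, smul_zero, add_zero, zero_add]
  have e := sub_eq_zero.mp z
  have sm : ∀ m : M, (2:ℤ) • m = (2:F) • m := fun m => by
    rw [show ((2:F)) = ((2:ℤ):F) by norm_num, Int.cast_smul_eq_zsmul]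
  rw [sm, sm] at e
  have := congrArg (fun m : M => (2⁻¹ : F) • m) e
  simpa [smul_smul, inv_mul_cancel₀ h2] using this
end
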